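/- For the enzyme dynamics system with initial data C1(0) = 2, E(0) = 2, S(0) = 1, P(0) = 1, the following constraint holds for all real ξ3, ξ5 and all t ∈ ℝ: (−4ξ3 − 4ξ5)·1 + (ξ3 + ξ5)·C1(t) + ξ3·E(t) + ξ5·S(t) + ξ5·P(t) = 0. -/

import Mathlib

/-! The total enzyme `C1 + E` and the total substrate `C1 + S + P` have zero derivative along
the flow, so they keep their initial value `4`; the constraint is `ξ3 (C1 + E - 4) + ξ5 (C1 + S + P - 4)`. -/

theorem is_const_of_hasDerivAt_zero {𝕜 G : Type*} [RCLike 𝕜] [NormedAddCommGroup G]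
    [NormedSpace 𝕜 G] {f : 𝕜 → G} (hf : ∀ x, HasDerivAt f 0 x) (x y : 𝕜) : f x = f y :=
  is_const_of_deriv_eq_zero (fun x ↦ (hf x).differentiableAt) (fun x ↦ (hf x).deriv) x y

section Enzyme

variable {k1 km1 k2 : ℝ} {C1 E S P : ℝ → ℝ}

theorem enzyme_total_enzyme_conserved
    (hC1 : ∀ t : ℝ, HasDerivAt C1 (k1 * S t * E t - (km1 + k2) * C1 t) t)
    (hE : ∀ t : ℝ, HasDerivAt E (-(k1 * S t * E t) + (km1 + k2) * C1 t) t) (t : ℝ) :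
    C1 t + E t = C1 0 + E 0 :=
  is_const_of_hasDerivAt_zero (f := fun t ↦ C1 t + E t)
    (fun t ↦ ((hC1 t).add (hE t)).congr_deriv (by ring)) t 0

theorem enzyme_total_substrate_conserved
    (hC1 : ∀ t : ℝ, HasDerivAt C1 (k1 * S t * E t - (km1 + k2) * C1 t) t)
    (hS : ∀ t : ℝ, HasDerivAt S (-(k1 * S t * E t) + km1 * C1 t) t)
    (hP : ∀ t : ℝ, HasDerivAt P (k2 * C1 t) t) (t : ℝ) :
    C1 t + S t + P t = C1 0 + S 0 + P 0 :=
  is_const_of_hasDerivAt_zero (f := fun t ↦ C1 t + S t + P t)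
    (fun t ↦ (((hC1 t).add (hS t)).add (hP t)).congr_deriv (by ring)) t 0

end Enzyme

/-- For the enzyme dynamics system with initial data `C1 0 = 2`, `E 0 = 2`,
`S 0 = 1`, `P 0 = 1`: for all real `ξ3, ξ5` and all `t : ℝ`,
`(−4ξ3 − 4ξ5)·1 + (ξ3 + ξ5)·C1 t + ξ3·E t + ξ5·S t + ξ5·P t = 0`. -/
theorem enzyme_constraint_initial_data_two
    (k1 km1 k2 : ℝ) (C1 E S P : ℝ → ℝ)
    (hC1 : ∀ t : ℝ, HasDerivAt C1 (k1 * S t * E t - (km1 + k2) * C1 t) t)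
    (hE : ∀ t : ℝ, HasDerivAt E (-(k1 * S t * E t) + (km1 + k2) * C1 t) t)
    (hS : ∀ t : ℝ, HasDerivAt S (-(k1 * S t * E t) + km1 * C1 t) t)
    (hP : ∀ t : ℝ, HasDerivAt P (k2 * C1 t) t)
    (hC10 : C1 0 = 2) (hE0 : E 0 = 2) (hS0 : S 0 = 1) (hP0 : P 0 = 1) :
    ∀ (ξ3 ξ5 : ℝ) (t : ℝ),
      (-4 * ξ3 - 4 * ξ5) * 1 + (ξ3 + ξ5) * C1 t + ξ3 * E t + ξ5 * S t + ξ5 * P t = 0 := by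
  intro ξ3 ξ5 t
  have h_enzyme := enzyme_total_enzyme_conserved hC1 hE t
  have h_substrate := enzyme_total_substrate_conserved hC1 hS hP t
  rw [hC10, hE0] at h_enzyme
  rw [hC10, hS0, hP0] at h_substrate
  linear_combination ξ3 * h_enzyme + ξ5 * h_substrate
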